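/- arXiv:1612.02476 — 10 statements merged into one kernel-verified Lean document; each statement's English description precedes it below -/
import Mathlib

section
/- Let R be a commutative ring, I an ideal of R, M an R-module, and P an I-primary submodule of M. If (P : M)P ⊄ IP (i.e. the submodule (P : M)•P is not contained in I•P), then P is a primary submodule of M. -/
/-!
Let `r • m ∈ P`. If `r • m ∉ I • P` the `I`-primary condition applies directly. Otherwise perturb
the pair to `(r + a, m + p)` with `a ∈ (P : M)` and `p ∈ P`: this keeps the product in `P` and does
not change whether `m ∈ P` or `r ∈ √(P : M)`. If every perturbed product stayed in `I • P`, expanding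
`(r + a) • (m + p)` would put every `a • p` in `I • P`, i.e. `(P : M) • P ≤ I • P`.
-/

/-- `P` is an `I`-primary submodule of `M`: `P` is proper and whenever
`r • m ∈ P \ I • P`, either `m ∈ P` or `r ∈ √(P : M)`. -/
def IsIPrimary {R : Type*} [CommRing R] {M : Type*} [AddCommGroup M] [Module R M]
    (I : Ideal R) (P : Submodule R M) : Prop :=
  P ≠ ⊤ ∧ ∀ r : R, ∀ m : M, r • m ∈ P → r • m ∉ I • P →
    m ∈ P ∨ r ∈ (P.colon ⊤).radical

/-- `P` is a primary submodule of `M`. -/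
def IsPrimarySubmodule {R : Type*} [CommRing R] {M : Type*} [AddCommGroup M] [Module R M]
    (P : Submodule R M) : Prop :=
  P ≠ ⊤ ∧ ∀ r : R, ∀ m : M, r • m ∈ P →
    m ∈ P ∨ r ∈ (P.colon ⊤).radical

section

variable {R M : Type*} [CommRing R] [AddCommGroup M] [Module R M]

theorem Submodule.smul_le_of_forall_add_smul_add_mem {J : Ideal R} {P N : Submodule R M}
    {r : R} {m : M} (hrm : r • m ∈ N) (h : ∀ a ∈ J, ∀ p ∈ P, (r + a) • (m + p) ∈ N) :
    J • P ≤ N := by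
  refine Submodule.smul_le.2 fun a ha p hp => ?_
  have hrp : r • p ∈ N := by
    simpa [smul_add, N.add_mem_iff_right hrm] using h 0 J.zero_mem p hp
  have ham : a • m ∈ N := by
    simpa [add_smul, N.add_mem_iff_right hrm] using h a ha 0 P.zero_mem
  have hexpand : a • p = (r + a) • (m + p) - (r • m + r • p + a • m) := by
    simp only [add_smul, smul_add]; abel
  rw [hexpand]
  exact N.sub_mem (h a ha p hp) (N.add_mem (N.add_mem hrm hrp) ham)

theorem IsIPrimary.mem_or_mem_radical_of_add_smul_add_notMem {I : Ideal R} {P : Submodule R M}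
    (hP : IsIPrimary I P) {r a : R} {m p : M} (hrm : r • m ∈ P) (ha : a ∈ P.colon ⊤)
    (hp : p ∈ P) (h : (r + a) • (m + p) ∉ I • P) :
    m ∈ P ∨ r ∈ (P.colon ⊤).radical := by
  have hmem : (r + a) • (m + p) ∈ P := by
    rw [add_smul, smul_add, smul_add]
    exact P.add_mem (P.add_mem hrm (P.smul_mem r hp))
      (P.add_mem (Submodule.mem_colon.1 ha m trivial) (Submodule.mem_colon.1 ha p trivial))
  refine (hP.2 _ _ hmem h).imp (fun hmp => ?_) (fun hra => ?_)
  · simpa using P.sub_mem hmp hp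
  · simpa using Ideal.sub_mem _ hra (Ideal.le_radical ha)

end

theorem stmt0 {R : Type*} [CommRing R] {M : Type*} [AddCommGroup M] [Module R M]
    (I : Ideal R) (P : Submodule R M)
    (hP : IsIPrimary I P)
    (h : ¬ (P.colon ⊤ • P ≤ I • P)) :
    IsPrimarySubmodule P := by
  refine ⟨hP.1, fun r m hrm => ?_⟩
  by_cases hIP : r • m ∈ I • P
  · obtain ⟨a, ha, p, hp, hap⟩ : ∃ a ∈ P.colon ⊤, ∃ p ∈ P, (r + a) • (m + p) ∉ I • P := by
      by_contra! hall
      exact h (Submodule.smul_le_of_forall_add_smul_add_mem hIP hall)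
    exact hP.mem_or_mem_radical_of_add_smul_add_notMem hrm ha hp hap
  · exact hP.2 r m hrm hIP
end

section
/- Let R be a commutative ring, I an ideal of R, M an R-module, and P an I-primary submodule of M. If N is a submodule of M with N ⊆ P, then the quotient submodule P/N is an I-primary submodule of the R-module M/N. -/
section

variable {R M M' : Type*} [CommRing R] [AddCommGroup M] [AddCommGroup M'] [Module R M]
  [Module R M']

open Submodule

theorem Submodule.colon_le_map_colon_image (f : M →ₗ[R] M') (P : Submodule R M) (S : Set M) :
    P.colon S ≤ (P.map f).colon (f '' S) := by
  rintro r hr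
  rw [mem_colon] at hr ⊢
  rintro _ ⟨s, hs, rfl⟩
  rw [← map_smul]
  exact mem_map_of_mem (hr s hs)

theorem IsIPrimary.map_of_surjective {I : Ideal R} {P : Submodule R M} (hP : IsIPrimary I P)
    {f : M →ₗ[R] M'} (hf : Function.Surjective f) (hker : LinearMap.ker f ≤ P) :
    IsIPrimary I (P.map f) := by
  obtain ⟨hne, hprim⟩ := hP
  have hcomap : (P.map f).comap f = P := comap_map_eq_self hker
  refine ⟨fun htop => hne ?_, fun r x hx hnx => ?_⟩
  · rw [← hcomap, htop, comap_top]
  obtain ⟨m, rfl⟩ := hf x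
  rw [← map_smul] at hx hnx
  have hm : r • m ∈ P := hcomap ▸ mem_comap.mpr hx
  have hnm : r • m ∉ I • P := fun h => hnx (map_smul'' I P f ▸ mem_map_of_mem h)
  have hcolon : P.colon ⊤ ≤ (P.map f).colon ⊤ := by
    simpa [Set.image_univ_of_surjective hf] using colon_le_map_colon_image f P Set.univ
  exact (hprim r m hm hnm).imp mem_map_of_mem (Ideal.radical_mono hcolon ·)

end

theorem stmt3 {R : Type*} [CommRing R] {M : Type*} [AddCommGroup M] [Module R M]
    (I : Ideal R) (P N : Submodule R M)
    (hP : IsIPrimary I P) (hNP : N ≤ P) :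
    IsIPrimary I (P.map N.mkQ) :=
  hP.map_of_surjective N.mkQ_surjective (N.ker_mkQ.trans_le hNP)
end

section
/- Let R be a commutative ring, I an ideal of R, M an R-module, and P an I-primary submodule of M. Let S be a multiplicatively closed subset of R such that S⁻¹P ≠ S⁻¹M and S⁻¹(IP) ⊆ (S⁻¹I)(S⁻¹P). Then S⁻¹P is an (S⁻¹I)-primary submodule of the S⁻¹R-module S⁻¹M. -/
/-!
Write `x = r / s` and `y = m / t`. If `x • y ∈ S⁻¹P`, then `r • (u • m) ∈ P` for some `u ∈ S`.
Localization commutes with `I • _`, so `x • y ∉ (S⁻¹I)(S⁻¹P) = S⁻¹(IP)` forces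
`r • (u • m) ∉ I • P`. Now `P` being `I`-primary gives either `u • m ∈ P`, whence `y ∈ S⁻¹P`,
or `r ∈ √(P : M)`, whose image lies in `√(S⁻¹P : S⁻¹M)`, an ideal containing `r / s`.
-/

section Localization

variable {R S M N : Type*} [CommRing R] [CommRing S] [Algebra R S]
  [AddCommGroup M] [AddCommGroup N] [Module R M] [Module R N] [Module S N] [IsScalarTower R S N]
  (p : Submonoid R) [IsLocalization p S] (f : M →ₗ[R] N) [IsLocalizedModule p f]

theorem Submodule.mk'_mem_localized'_iff {P : Submodule R M} {m : M} {s : p} :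
    IsLocalizedModule.mk' f m s ∈ P.localized' S p f ↔ ∃ u : p, u • m ∈ P := by
  constructor
  · rintro ⟨n, hn, t, h⟩
    obtain ⟨c, hc⟩ := (IsLocalizedModule.mk'_eq_mk'_iff f n m t s).1 h
    refine ⟨c * t, ?_⟩
    rw [mul_smul, hc]
    exact P.smul_of_tower_mem _ (P.smul_of_tower_mem _ hn)
  · rintro ⟨u, hu⟩
    exact ⟨u • m, hu, u * s, IsLocalizedModule.mk'_cancel_left f m u s⟩

theorem Submodule.algebraMap_mem_radical_colon_localized' {P : Submodule R M} {r : R}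
    (hr : r ∈ (P.colon ⊤).radical) :
    algebraMap R S r ∈ ((P.localized' S p f).colon ⊤).radical := by
  obtain ⟨n, hn⟩ := hr
  refine ⟨n, Submodule.mem_colon.2 fun x _ => ?_⟩
  obtain ⟨⟨m, s⟩, rfl⟩ := IsLocalizedModule.mk'_surjective p f x
  rw [← map_pow, algebraMap_smul, Function.uncurry_apply_pair, ← IsLocalizedModule.mk'_smul]
  exact ⟨_, Submodule.mem_colon.1 hn m trivial, s, rfl⟩

theorem IsIPrimary.localized' {I : Ideal R} {P : Submodule R M} (hP : IsIPrimary I P)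
    (hproper : P.localized' S p f ≠ ⊤) :
    IsIPrimary (I.map (algebraMap R S)) (P.localized' S p f) := by
  refine ⟨hproper, fun x y hxy hxy' => ?_⟩
  obtain ⟨⟨r, s⟩, rfl⟩ := IsLocalization.mk'_surjective p x
  obtain ⟨⟨m, t⟩, rfl⟩ := IsLocalizedModule.mk'_surjective p f y
  rw [Function.uncurry_apply_pair, IsLocalizedModule.mk'_smul_mk'] at hxy hxy'
  rw [← Ideal.localized'_eq_map S p, ← Submodule.localized'_smul,
    Submodule.mk'_mem_localized'_iff] at hxy'
  obtain ⟨u, hu⟩ := (Submodule.mk'_mem_localized'_iff p f).1 hxy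
  rw [smul_comm] at hu
  rcases hP.2 r (u • m) hu fun h => hxy' ⟨u, by rwa [smul_comm]⟩ with hm | hr
  · exact Or.inl ((Submodule.mk'_mem_localized'_iff p f).2 ⟨u, hm⟩)
  · exact Or.inr <| IsLocalization.mk'_mem_iff.2 <|
      Submodule.algebraMap_mem_radical_colon_localized' p f hr

end Localization

theorem stmt4_general {R : Type*} [CommRing R] {M : Type*} [AddCommGroup M] [Module R M]
    (I : Ideal R) (P : Submodule R M) (S : Submonoid R)
    (hP : IsIPrimary I P)
    (hproper : P.localized S ≠ ⊤) :
    IsIPrimary (I.map (algebraMap R (Localization S))) (P.localized S) :=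
  hP.localized' _ _ hproper

theorem stmt4 {R : Type*} [CommRing R] {M : Type*} [AddCommGroup M] [Module R M]
    (I : Ideal R) (P : Submodule R M) (S : Submonoid R)
    (hP : IsIPrimary I P)
    (hproper : P.localized S ≠ ⊤)
    (hIP : (I • P).localized S ≤
      (I.map (algebraMap R (Localization S))) • (P.localized S)) :
    IsIPrimary (I.map (algebraMap R (Localization S))) (P.localized S) :=
  stmt4_general I P S hP hproper
end

section
/- Let R₁, R₂ be commutative rings, M₁ an R₁-module, M₂ an R₂-module, and consider the ring R = R₁ × R₂ and the R-module M = M₁ × M₂. Let I₁, I₂ be ideals of R₁ and R₂ respectively and let I = I₁ × I₂ be the corresponding ideal of R. If P₁ is an I₁-primary submodule of M₁ and I₂M₂ = M₂, then P₁ × M₂ is an I-primary submodule of M. -/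
section Prod

variable {R₁ R₂ : Type*} [CommRing R₁] [CommRing R₂]
variable {M₁ M₂ : Type*} [AddCommGroup M₁] [AddCommGroup M₂]
variable [Module R₁ M₁] [Module R₂ M₂]

/-- `M₁` as a module over `R₁ × R₂`, via the first projection. -/
noncomputable local instance mod1 : Module (R₁ × R₂) M₁ :=
  Module.compHom M₁ (RingHom.fst R₁ R₂)

/-- `M₂` as a module over `R₁ × R₂`, via the second projection. -/
noncomputable local instance mod2 : Module (R₁ × R₂) M₂ :=
  Module.compHom M₂ (RingHom.snd R₁ R₂)

/-- The submodule `P₁ × M₂` of the `(R₁ × R₂)`-module `M₁ × M₂`. -/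
noncomputable def prodWithTop (P₁ : Submodule R₁ M₁) :
    Submodule (R₁ × R₂) (M₁ × M₂) where
  carrier := {p : M₁ × M₂ | p.1 ∈ P₁}
  add_mem' := fun ha hb => P₁.add_mem ha hb
  zero_mem' := P₁.zero_mem
  smul_mem' := fun c _x hx => P₁.smul_mem c.1 hx

section Lemmas

variable {P₁ : Submodule R₁ M₁}

theorem mem_prodWithTop {p : M₁ × M₂} : p ∈ prodWithTop (R₂ := R₂) P₁ ↔ p.1 ∈ P₁ := Iff.rfl

theorem prodWithTop_ne_top (h : P₁ ≠ ⊤) : prodWithTop (R₂ := R₂) (M₂ := M₂) P₁ ≠ ⊤ := by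
  refine fun htop => h (Submodule.eq_top_iff'.mpr fun x => ?_)
  simpa [mem_prodWithTop] using htop.ge (Submodule.mem_top (x := (x, (0 : M₂))))

theorem colon_prodWithTop :
    (prodWithTop (R₂ := R₂) (M₂ := M₂) P₁).colon ⊤ = (P₁.colon ⊤).comap (RingHom.fst R₁ R₂) := by
  ext r
  simp only [Ideal.mem_comap, Submodule.mem_colon, Set.top_eq_univ, Set.mem_univ, true_implies,
    Prod.forall, mem_prodWithTop, Prod.smul_fst, RingHom.coe_fst]
  exact ⟨fun h x => h x 0, fun h x _ => h x⟩

variable {I₁ : Ideal R₁} {I₂ : Ideal R₂}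

theorem inl_mem_smul_prodWithTop {x : M₁} (hx : x ∈ I₁ • P₁) :
    (x, (0 : M₂)) ∈ I₁.prod I₂ • prodWithTop (R₂ := R₂) P₁ := by
  refine Submodule.smul_induction_on hx (fun r hr n hn => ?_) fun x y hx hy => ?_
  · have hsmul : (r • n, (0 : M₂)) = ((r, 0) : R₁ × R₂) • (n, (0 : M₂)) :=
      Prod.ext rfl (smul_zero _).symm
    exact hsmul ▸ Submodule.smul_mem_smul ⟨hr, I₂.zero_mem⟩ hn
  · simpa using Submodule.add_mem _ hx hy

theorem inr_mem_smul_prodWithTop {y : M₂} (hy : y ∈ I₂ • (⊤ : Submodule R₂ M₂)) :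
    ((0 : M₁), y) ∈ I₁.prod I₂ • prodWithTop (R₂ := R₂) P₁ := by
  refine Submodule.smul_induction_on hy (fun r hr n _ => ?_) fun x y hx hy => ?_
  · have hsmul : ((0 : M₁), r • n) = ((0, r) : R₁ × R₂) • ((0 : M₁), n) :=
      Prod.ext (smul_zero _).symm rfl
    exact hsmul ▸ Submodule.smul_mem_smul ⟨I₁.zero_mem, hr⟩ P₁.zero_mem
  · simpa using Submodule.add_mem _ hx hy

theorem prodWithTop_smul_le (hI₂ : I₂ • (⊤ : Submodule R₂ M₂) = ⊤) :
    prodWithTop (M₂ := M₂) (I₁ • P₁) ≤ I₁.prod I₂ • prodWithTop (R₂ := R₂) P₁ := by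
  rintro ⟨x, y⟩ hx
  have hy : y ∈ I₂ • (⊤ : Submodule R₂ M₂) := by rw [hI₂]; exact Submodule.mem_top
  simpa using Submodule.add_mem _ (inl_mem_smul_prodWithTop (I₂ := I₂) hx)
    (inr_mem_smul_prodWithTop (I₁ := I₁) (P₁ := P₁) hy)

end Lemmas

theorem stmt8 (I₁ : Ideal R₁) (I₂ : Ideal R₂)
    (P₁ : Submodule R₁ M₁)
    (hP₁ : IsIPrimary I₁ P₁)
    (hI₂ : I₂ • (⊤ : Submodule R₂ M₂) = ⊤) :
    IsIPrimary (I₁.prod I₂) (prodWithTop (M₂ := M₂) P₁) := by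
  obtain ⟨hne, hprimary⟩ := hP₁
  refine ⟨prodWithTop_ne_top hne, fun r m hrm hnot => ?_⟩
  rw [colon_prodWithTop, ← Ideal.comap_radical]
  exact hprimary r.1 m.1 hrm fun h => hnot (prodWithTop_smul_le hI₂ h)

end Prod
end

section
/- Let R be a commutative ring, I an ideal of R, M an R-module, and P a proper submodule of M. Then P is an I-primary submodule of M if and only if the quotient submodule P/IP is a 0-primary (weakly primary) submodule of the R-module M/IP, i.e. for all r ∈ R and x ∈ M/IP, 0 ≠ rx ∈ P/IP implies x ∈ P/IP or r ∈ √(P/IP : M/IP). -/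
/-- `Q` is a `0`-primary (weakly primary) submodule of `M`. -/
def IsWeaklyPrimary {R : Type*} [CommRing R] {M : Type*} [AddCommGroup M] [Module R M]
    (Q : Submodule R M) : Prop :=
  Q ≠ ⊤ ∧ ∀ r : R, ∀ m : M, r • m ∈ Q → r • m ≠ 0 →
    m ∈ Q ∨ r ∈ (Q.colon ⊤).radical

/-!
Both notions are instances of one condition on a submodule `P`: `P ≠ ⊤`, and `r • m ∈ P`,
`r • m ∉ N` imply `m ∈ P` or `r ∈ √(P : M)`. `I`-primary is the case `N = I • P`, weakly
primary the case `N = ⊥`. The condition is invariant under pulling back along a surjection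
`f` (which preserves colon ideals), and `P` is the pullback of `P / I • P` along
`M → M / I • P`, whose kernel `I • P` is the pullback of `⊥`.
-/

namespace Submodule

section CommSemiring

variable {R M M' : Type*} [CommSemiring R] [AddCommMonoid M] [Module R M]
  [AddCommMonoid M'] [Module R M']

def IsPrimaryOutside (P N : Submodule R M) : Prop :=
  P ≠ ⊤ ∧ ∀ r : R, ∀ m : M, r • m ∈ P → r • m ∉ N → m ∈ P ∨ r ∈ (P.colon ⊤).radical

theorem comap_colon_univ_of_surjective {f : M →ₗ[R] M'} (hf : Function.Surjective f)
    (Q : Submodule R M') : (Q.comap f).colon ⊤ = Q.colon ⊤ := by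
  ext r
  simp only [mem_colon, Set.top_eq_univ, Set.mem_univ, true_implies, mem_comap, map_smul,
    hf.forall]

theorem comap_ne_top_iff_of_surjective {f : M →ₗ[R] M'} (hf : Function.Surjective f)
    {Q : Submodule R M'} : Q.comap f ≠ ⊤ ↔ Q ≠ ⊤ := by
  rw [← comap_top f, (comap_injective_of_surjective hf).ne_iff]

theorem isPrimaryOutside_comap_iff {f : M →ₗ[R] M'} (hf : Function.Surjective f)
    (Q N : Submodule R M') :
    (Q.comap f).IsPrimaryOutside (N.comap f) ↔ Q.IsPrimaryOutside N := by
  simp only [IsPrimaryOutside, comap_ne_top_iff_of_surjective hf,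
    comap_colon_univ_of_surjective hf, mem_comap, map_smul, hf.forall]

end CommSemiring

section CommRing

variable {R M : Type*} [CommRing R] [AddCommGroup M] [Module R M]

theorem isIPrimary_iff_isPrimaryOutside (I : Ideal R) (P : Submodule R M) :
    IsIPrimary I P ↔ P.IsPrimaryOutside (I • P) :=
  Iff.rfl

theorem isWeaklyPrimary_iff_isPrimaryOutside (Q : Submodule R M) :
    IsWeaklyPrimary Q ↔ Q.IsPrimaryOutside ⊥ := by
  simp only [IsWeaklyPrimary, IsPrimaryOutside, mem_bot]

theorem comap_mkQ_map_mkQ_of_le {N P : Submodule R M} (h : N ≤ P) :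
    (P.map N.mkQ).comap N.mkQ = P := by
  rw [comap_map_mkQ, sup_eq_right.mpr h]

end CommRing

end Submodule

open Submodule in
theorem stmt9_general {R : Type*} [CommRing R] {M : Type*} [AddCommGroup M] [Module R M]
    (I : Ideal R) (P : Submodule R M) :
    IsIPrimary I P ↔ IsWeaklyPrimary (P.map (I • P).mkQ) := by
  rw [isIPrimary_iff_isPrimaryOutside, isWeaklyPrimary_iff_isPrimaryOutside,
    ← isPrimaryOutside_comap_iff (I • P).mkQ_surjective, comap_bot, ker_mkQ,
    comap_mkQ_map_mkQ_of_le smul_le_right]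

theorem stmt9 {R : Type*} [CommRing R] {M : Type*} [AddCommGroup M] [Module R M]
    (I : Ideal R) (P : Submodule R M) (hproper : P ≠ ⊤) :
    IsIPrimary I P ↔ IsWeaklyPrimary (P.map (I • P).mkQ) :=
  stmt9_general I P
end

section
/- Let R be a commutative ring, I an ideal of R, M an R-module, and P a proper submodule of M. Then P is an I-primary submodule of M if and only if for every ideal J of R and every submodule N of M such that JN ⊆ P and JN ⊄ IP (i.e. the submodule J•N is contained in P but not contained in I•P), one has J ⊆ √(P : M) or N ⊆ P. -/
namespace Submodule

variable {R M : Type*} [CommRing R] [AddCommGroup M] [Module R M]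

theorem map_mem_of_forall_notMem {M' : Type*} [AddCommGroup M']
    {N B : Submodule R M} (hN : ¬ N ≤ B) (f : M →+ M') (Q : AddSubgroup M')
    (hf : ∀ n ∈ N, n ∉ B → f n ∈ Q) :
    ∀ n ∈ N, f n ∈ Q := by
  obtain ⟨m, hmN, hmB⟩ := SetLike.not_le_iff_exists.mp hN
  intro n hn
  by_cases hnB : n ∈ B
  · have hnmB : n + m ∉ B := fun h => hmB (by simpa using B.sub_mem h hnB)
    have hsplit : f n = f (n + m) - f m := by simp
    rw [hsplit]
    exact Q.sub_mem (hf _ (N.add_mem hn hmN) hnmB) (hf m hmN hmB)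
  · exact hf n hn hnB

theorem smul_le_of_forall_notMem {J A : Ideal R} {N B Q : Submodule R M}
    (hJ : ¬ J ≤ A) (hN : ¬ N ≤ B)
    (h : ∀ j ∈ J, j ∉ A → ∀ n ∈ N, n ∉ B → j • n ∈ Q) :
    J • N ≤ Q := by
  have hnotMem : ∀ n ∈ N, n ∉ B → ∀ j ∈ J, j • n ∈ Q := fun n hn hnB =>
    map_mem_of_forall_notMem hJ ((smulAddHom R M).flip n) Q.toAddSubgroup
      fun j hj hjA => h j hj hjA n hn hnB
  exact smul_le.2 fun j hj =>
    map_mem_of_forall_notMem hN (smulAddHom R M j) Q.toAddSubgroup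
      fun n hn hnB => hnotMem n hn hnB j hj

theorem span_singleton_smul_span_singleton (r : R) (m : M) :
    Ideal.span {r} • span R {m} = span R {r • m} := by
  rw [span_smul_span, Set.singleton_smul_singleton]

end Submodule

open Submodule

theorem stmt10 {R : Type*} [CommRing R] {M : Type*} [AddCommGroup M] [Module R M]
    (I : Ideal R) (P : Submodule R M) (hproper : P ≠ ⊤) :
    IsIPrimary I P ↔
      ∀ (J : Ideal R) (N : Submodule R M), J • N ≤ P → ¬ (J • N ≤ I • P) →
        J ≤ (P.colon ⊤).radical ∨ N ≤ P := by
  constructor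
  · rintro ⟨-, hP⟩ J N hJN hJNI
    by_contra! ⟨hJ, hN⟩
    refine hJNI (smul_le_of_forall_notMem hJ hN fun j hj hjrad n hn hnP => ?_)
    by_contra hjn
    exact (hP j n (hJN (smul_mem_smul hj hn)) hjn).elim hnP hjrad
  · intro h
    refine ⟨hproper, fun r m hrm hrmI => ?_⟩
    have hspan := span_singleton_smul_span_singleton r m
    have hle : Ideal.span {r} • span R {m} ≤ P := by
      rwa [hspan, span_singleton_le_iff_mem]
    have hnle : ¬ Ideal.span {r} • span R {m} ≤ I • P := by
      rwa [hspan, span_singleton_le_iff_mem]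
    rcases h _ _ hle hnle with hr | hm
    · exact Or.inr (hr (Ideal.mem_span_singleton_self r))
    · exact Or.inl (hm (mem_span_singleton_self m))
end

section
/- Let R be a commutative ring, I an ideal of R, and M a finitely generated faithful multiplication R-module (i.e. M is finitely generated, has zero annihilator, and every submodule N of M satisfies N = (N : M)M). Let P be a proper submodule of M with (IP : M) = I(P : M). Then P is an I-primary submodule of M if and only if (P : M) is an I-primary ideal of R. -/
/-- `Q` is an `I`-primary ideal of `R`: `Q` is proper and whenever
`a * b ∈ Q \ I * Q`, either `a ∈ Q` or `b ∈ √Q`. -/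
def IsIPrimaryIdeal {R : Type*} [CommRing R] (I Q : Ideal R) : Prop :=
  Q ≠ ⊤ ∧ ∀ a b : R, a * b ∈ Q → a * b ∉ I * Q →
    a ∈ Q ∨ b ∈ Q.radical

/-!
Both directions rest on one observation: if an additive map `f` sends some `a₀ ∈ J` outside a
subgroup `H`, and every `a ∈ J` with `f a ∉ H` lies in `K`, then `J ≤ K` (for `f a ∈ H` look at
`a + a₀`). Given `r • m ∈ P \ I • P` with `r ∉ √(P : M)`, apply this to multiplication by `r` on
`J = (Rm : M)`: since `r • m ∉ I • P = I (P : M) M`, some `a ∈ J` has `r a ∉ I (P : M)`, so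
`J ≤ (P : M)` and `Rm = J M ≤ P`. Conversely, apply it to multiplication by `a b` on `M`, the
witness coming from `a b ∉ I (P : M) = (I P : M)`.
-/

open Submodule

theorem AddSubgroup.le_of_forall_map_notMem {A B : Type*} [AddGroup A] [AddGroup B] (f : A →+ B)
    {J K : AddSubgroup A} {H : AddSubgroup B} (hK : ∀ a ∈ J, f a ∉ H → a ∈ K)
    {a₀ : A} (ha₀ : a₀ ∈ J) (hfa₀ : f a₀ ∉ H) : J ≤ K := by
  have ha₀K : a₀ ∈ K := hK a₀ ha₀ hfa₀
  intro a ha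
  by_cases hfa : f a ∈ H
  · have hsum : a + a₀ ∈ K :=
      hK _ (J.add_mem ha ha₀) (by rwa [map_add, H.add_mem_cancel_left hfa])
    exact (K.add_mem_cancel_right ha₀K).1 hsum
  · exact hK a ha hfa

section

variable {R M : Type*} [CommSemiring R] [AddCommMonoid M] [Module R M]

theorem Submodule.colon_univ_eq_top_iff {N : Submodule R M} :
    N.colon Set.univ = ⊤ ↔ N = ⊤ := by
  rw [colon_eq_top_iff_subset, Set.univ_subset_iff, coe_eq_univ]

theorem Submodule.mul_mem_colon_of_smul_mem {N : Submodule R M} {S : Set M} {r a : R} {m : M}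
    (hrm : r • m ∈ N) (ha : a ∈ (span R {m}).colon S) : r * a ∈ N.colon S := by
  refine mem_colon.2 fun s hs => ?_
  obtain ⟨c, hc⟩ := mem_span_singleton.1 (mem_colon.1 ha s hs)
  rw [mul_smul, ← hc, smul_comm]
  exact N.smul_mem c hrm

theorem Submodule.smul_mem_smul_of_forall_mul_mem {J K : Ideal R} {N : Submodule R M} {r : R}
    {x : M} (hx : x ∈ J • N) (h : ∀ j ∈ J, r * j ∈ K) : r • x ∈ K • N := by
  refine smul_induction_on hx (fun j hj n hn => ?_) fun x y hx hy => ?_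
  · rw [← mul_smul]; exact smul_mem_smul (h j hj) hn
  · rw [smul_add]; exact add_mem hx hy

end

section

variable {R M : Type*} [CommRing R] [AddCommGroup M] [Module R M]

theorem IsIPrimary.isIPrimaryIdeal_colon {I : Ideal R} {P : Submodule R M} (hP : IsIPrimary I P)
    (hIP : (I • P).colon ⊤ ≤ I * P.colon ⊤) : IsIPrimaryIdeal I (P.colon ⊤) := by
  refine ⟨hP.1 ∘ colon_univ_eq_top_iff.1, fun a b hab hab' => or_iff_not_imp_right.2 fun hb => ?_⟩
  have hcancel : ∀ m ∈ (⊤ : AddSubgroup M), (a * b) • m ∉ I • P → a • m ∈ P := by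
    intro m _ hm
    have hbam : b • a • m ∈ P := by rw [smul_smul, mul_comm]; exact mem_colon.1 hab m trivial
    rw [mul_comm, ← smul_smul] at hm
    exact (hP.2 b (a • m) hbam hm).resolve_right hb
  obtain ⟨m₀, -, hm₀⟩ : ∃ m₀ ∈ (⊤ : Set M), (a * b) • m₀ ∉ I • P := by
    simpa [mem_colon] using fun h => hab' (hIP h)
  have hle := AddSubgroup.le_of_forall_map_notMem (DistribSMul.toAddMonoidHom M (a * b))
    (K := (P.comap (a • LinearMap.id)).toAddSubgroup) (H := (I • P).toAddSubgroup)
    hcancel (AddSubgroup.mem_top m₀) hm₀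
  exact mem_colon.2 fun m _ => hle (AddSubgroup.mem_top m)

theorem isIPrimary_of_isIPrimaryIdeal_colon {I : Ideal R} {P : Submodule R M}
    (hmult : ∀ N : Submodule R M, N.colon ⊤ • (⊤ : Submodule R M) = N)
    (hQ : IsIPrimaryIdeal I (P.colon ⊤)) : IsIPrimary I P := by
  refine ⟨hQ.1 ∘ colon_univ_eq_top_iff.2, fun r m hrm hrm' => or_iff_not_imp_right.2 fun hr => ?_⟩
  set J := (span R {m}).colon ⊤
  have hm : m ∈ J • (⊤ : Submodule R M) := (hmult _).symm ▸ mem_span_singleton_self m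
  have hcancel : ∀ a ∈ J.toAddSubgroup, r * a ∉ I * P.colon ⊤ → a ∈ P.colon ⊤ := by
    intro a ha hra
    rw [mul_comm r] at hra
    exact (hQ.2 a r (mul_comm r a ▸ mul_mem_colon_of_smul_mem hrm ha) hra).resolve_right hr
  obtain ⟨a₀, ha₀, hra₀⟩ : ∃ a₀ ∈ J, r * a₀ ∉ I * P.colon ⊤ := by
    by_contra! h
    apply hrm'
    rw [← hmult P, ← Submodule.mul_smul]
    exact smul_mem_smul_of_forall_mul_mem hm h
  have hJ : J ≤ P.colon ⊤ :=
    AddSubgroup.le_of_forall_map_notMem (AddMonoidHom.mulLeft r)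
      (K := (P.colon ⊤).toAddSubgroup) (H := (I * P.colon ⊤).toAddSubgroup) hcancel ha₀ hra₀
  rw [← hmult P]
  exact smul_mono_left hJ hm

end

theorem stmt11_general {R : Type*} [CommRing R] {M : Type*} [AddCommGroup M] [Module R M]
    (I : Ideal R) (P : Submodule R M)
    (hmult : ∀ N : Submodule R M, (N.colon ⊤) • (⊤ : Submodule R M) = N)
    (hIP : (I • P).colon ⊤ = I * (P.colon ⊤)) :
    IsIPrimary I P ↔ IsIPrimaryIdeal I (P.colon ⊤) :=
  ⟨fun h => h.isIPrimaryIdeal_colon hIP.le, isIPrimary_of_isIPrimaryIdeal_colon hmult⟩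

theorem stmt11 {R : Type*} [CommRing R] {M : Type*} [AddCommGroup M] [Module R M]
    (I : Ideal R) (P : Submodule R M)
    (hfg : Module.Finite R M)
    (hfaithful : (⊤ : Submodule R M).annihilator = ⊥)
    (hmult : ∀ N : Submodule R M, (N.colon ⊤) • (⊤ : Submodule R M) = N)
    (hproper : P ≠ ⊤)
    (hIP : (I • P).colon ⊤ = I * (P.colon ⊤)) :
    IsIPrimary I P ↔ IsIPrimaryIdeal I (P.colon ⊤) :=
  stmt11_general I P hmult hIP
end

section
/- Let R be a commutative ring, M a faithful multiplication R-module (i.e. M has zero annihilator and every submodule N of M satisfies N = (N : M)M), P a submodule of M, and J a finitely generated faithful multiplication ideal of R. Then: (1) P = (JP : J), where (JP : J) = {m ∈ M : Jm ⊆ JP}; and (2) if P ⊆ JM, then (KP : J) = K(P : J) for every ideal K of R, where (N : J) = {m ∈ M : Jm ⊆ N}. -/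
/-!
A finitely generated faithful multiplication ideal `J` is locally principal: at every maximal
ideal `p` there are `a ∈ J` and `c ∉ p` with `c J ⊆ R a`, since otherwise `J = p J`, which
Nakayama's lemma and faithfulness forbid. Membership in a submodule can be tested locally (some
`c ∉ p` must carry the element into it, for every maximal `p`), and locally `a` can be cancelled:
`J`-torsion of a faithful multiplication module vanishes. This gives `(JP : J) = P`, and
`J (P : J) = P` when `P ⊆ JM`; then `KP = J (K (P : J))`, so `(KP : J) = K (P : J)`.
-/

/-- For an ideal `J` of `R` and a submodule `N` of `M`, `(N : J)` is the
submodule `{m : M | ∀ a ∈ J, a • m ∈ N}`. -/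
def colonIdeal {R : Type*} [CommRing R] {M : Type*} [AddCommGroup M] [Module R M]
    (N : Submodule R M) (J : Ideal R) : Submodule R M where
  carrier := {m : M | ∀ a ∈ J, a • m ∈ N}
  add_mem' := fun ha hb a haJ => by
    rw [smul_add]; exact N.add_mem (ha a haJ) (hb a haJ)
  zero_mem' := fun a _ => by rw [smul_zero]; exact N.zero_mem
  smul_mem' := fun r m hm a haJ => by
    rw [smul_comm]; exact N.smul_mem r (hm a haJ)

section

variable {R : Type*} [CommRing R] {M : Type*} [AddCommGroup M] [Module R M]

theorem Submodule.not_le_smul_of_fg_of_annihilator_eq_bot {N : Submodule R M} (hN : N.FG)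
    (hNfaithful : N.annihilator = ⊥) {p : Ideal R} (hp : p ≠ ⊤) : ¬N ≤ p • N := by
  intro hle
  obtain ⟨r, hr1, hr0⟩ :=
    Submodule.exists_sub_one_mem_and_smul_eq_zero_of_fg_of_le_smul p N hN hle
  have hr : r = 0 := by
    rw [← Submodule.mem_bot R, ← hNfaithful]
    exact Submodule.mem_annihilator.mpr hr0
  rw [hr, zero_sub, p.neg_mem_iff] at hr1
  exact hp (p.eq_top_of_isUnit_mem hr1 isUnit_one)

theorem Ideal.exists_mul_mem_span_singleton_of_isMaximal {J : Ideal R} (hJfg : J.FG)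
    (hJfaithful : (J : Submodule R R).annihilator = ⊥)
    (hJmult : ∀ K : Ideal R, K ≤ J → ∃ C : Ideal R, K = C * J)
    {p : Ideal R} (hp : p.IsMaximal) :
    ∃ a ∈ J, ∃ c ∉ p, ∀ b ∈ J, c * b ∈ Ideal.span {a} := by
  by_contra! h
  refine Submodule.not_le_smul_of_fg_of_annihilator_eq_bot hJfg hJfaithful hp.ne_top
    fun a ha => ?_
  obtain ⟨C, hC⟩ := hJmult _ (Ideal.span_singleton_le_iff_mem J |>.mpr ha)
  have hCp : C ≤ p := fun c hc => by
    by_contra hcp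
    obtain ⟨b, hb, hcb⟩ := h a ha c hcp
    exact hcb (hC ▸ Ideal.mul_mem_mul hc hb)
  rw [Ideal.smul_eq_mul]
  exact Ideal.mul_mono_left hCp (hC ▸ Ideal.mem_span_singleton_self a)

theorem Submodule.mem_of_forall_isMaximal_exists_smul_mem {Y : Submodule R M} {x : M}
    (h : ∀ p : Ideal R, p.IsMaximal → ∃ c ∉ p, c • x ∈ Y) : x ∈ Y := by
  by_contra hx
  have hne : Y.colon {x} ≠ ⊤ := fun htop => hx <| by
    have h1 : (1 : R) ∈ Y.colon {x} := htop ▸ Submodule.mem_top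
    simpa using Submodule.mem_colon_singleton.mp h1
  obtain ⟨p, hp, hle⟩ := Ideal.exists_le_maximal _ hne
  obtain ⟨c, hcp, hc⟩ := h p hp
  exact hcp (hle (Submodule.mem_colon_singleton.mpr hc))

theorem exists_smul_eq_smul_of_mem_smul {J : Ideal R} {a c : R}
    (hc : ∀ b ∈ J, c * b ∈ Ideal.span {a}) {Y : Submodule R M} {w : M} (hw : w ∈ J • Y) :
    ∃ y ∈ Y, a • y = c • w := by
  have hcw : c • w ∈ Ideal.span {a} • Y := by
    refine Submodule.smul_induction_on hw (fun b hb y hy => ?_) (fun x y hx hy => ?_)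
    · rw [smul_smul]
      exact Submodule.smul_mem_smul (hc b hb) hy
    · rw [smul_add]
      exact Submodule.add_mem _ hx hy
  rw [Submodule.ideal_span_singleton_smul] at hcw
  exact (Submodule.mem_smul_pointwise_iff_exists _ _ _).mp hcw

theorem colonIdeal_bot_eq_bot {J : Ideal R}
    (hMfaithful : (⊤ : Submodule R M).annihilator = ⊥)
    (hMmult : ∀ N : Submodule R M, (N.colon ⊤) • (⊤ : Submodule R M) = N)
    (hJfaithful : (J : Submodule R R).annihilator = ⊥) :
    colonIdeal (⊥ : Submodule R M) J = ⊥ := by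
  have hcolon : (colonIdeal (⊥ : Submodule R M) J).colon ⊤ = ⊥ := by
    refine eq_bot_iff.mpr fun d hd => ?_
    rw [← hJfaithful, Submodule.mem_annihilator]
    intro b hb
    have hdb : d * b ∈ (⊤ : Submodule R M).annihilator :=
      Submodule.mem_annihilator.mpr fun m _ => by
        rw [mul_comm, mul_smul]
        exact (Submodule.mem_bot R).mp (Submodule.mem_colon.mp hd m trivial b hb)
    rw [hMfaithful, Submodule.mem_bot] at hdb
    simpa using hdb
  rw [← hMmult (colonIdeal ⊥ J), hcolon, Submodule.bot_smul]

theorem colonIdeal_smul_eq_self {J : Ideal R}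
    (hMfaithful : (⊤ : Submodule R M).annihilator = ⊥)
    (hMmult : ∀ N : Submodule R M, (N.colon ⊤) • (⊤ : Submodule R M) = N)
    (hJfg : J.FG) (hJfaithful : (J : Submodule R R).annihilator = ⊥)
    (hJmult : ∀ K : Ideal R, K ≤ J → ∃ C : Ideal R, K = C * J) (Y : Submodule R M) :
    colonIdeal (J • Y) J = Y := by
  refine le_antisymm (fun x hx => ?_) fun x hx b hb => Submodule.smul_mem_smul hb hx
  refine Submodule.mem_of_forall_isMaximal_exists_smul_mem fun p hp => ?_
  obtain ⟨a, haJ, c, hcp, hc⟩ :=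
    Ideal.exists_mul_mem_span_singleton_of_isMaximal hJfg hJfaithful hJmult hp
  obtain ⟨y, hyY, hy⟩ := exists_smul_eq_smul_of_mem_smul hc (hx a haJ)
  -- `a` annihilates `c • x - y`, and `J c ⊆ R a`, so `J` annihilates `c • (c • x - y)`.
  have htorsion : c • (c • x - y) ∈ colonIdeal (⊥ : Submodule R M) J := fun b hb => by
    obtain ⟨s, hs⟩ := Ideal.mem_span_singleton'.mp (hc b hb)
    rw [Submodule.mem_bot, smul_comm b c, smul_smul, ← hs, mul_smul, smul_sub, smul_comm a c, hy,
      sub_self, smul_zero]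
  rw [colonIdeal_bot_eq_bot hMfaithful hMmult hJfaithful, Submodule.mem_bot, smul_sub,
    sub_eq_zero] at htorsion
  refine ⟨c * c, hp.isPrime.mul_notMem hcp hcp, ?_⟩
  rw [mul_smul, htorsion]
  exact Y.smul_mem c hyY

theorem smul_colonIdeal_eq_self {J : Ideal R} (hJfg : J.FG)
    (hJfaithful : (J : Submodule R R).annihilator = ⊥)
    (hJmult : ∀ K : Ideal R, K ≤ J → ∃ C : Ideal R, K = C * J)
    {N : Submodule R M} (hN : N ≤ J • (⊤ : Submodule R M)) :
    J • colonIdeal N J = N := by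
  refine le_antisymm (Submodule.smul_le.mpr fun b hb m hm => hm b hb) fun x hx => ?_
  refine Submodule.mem_of_forall_isMaximal_exists_smul_mem fun p hp => ?_
  obtain ⟨a, haJ, c, hcp, hc⟩ :=
    Ideal.exists_mul_mem_span_singleton_of_isMaximal hJfg hJfaithful hJmult hp
  obtain ⟨m, -, hm⟩ := exists_smul_eq_smul_of_mem_smul hc (hN hx)
  have hcm : c • m ∈ colonIdeal N J := fun b hb => by
    obtain ⟨s, hs⟩ := Ideal.mem_span_singleton'.mp (hc b hb)
    rw [smul_comm, smul_smul, ← hs, mul_smul, hm]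
    exact N.smul_mem s (N.smul_mem c hx)
  refine ⟨c * c, hp.isPrime.mul_notMem hcp hcp, ?_⟩
  rw [mul_smul, ← hm, smul_comm]
  exact Submodule.smul_mem_smul haJ hcm

end

theorem stmt14 {R : Type*} [CommRing R] {M : Type*} [AddCommGroup M] [Module R M]
    (P : Submodule R M) (J : Ideal R)
    (hMfaithful : (⊤ : Submodule R M).annihilator = ⊥)
    (hMmult : ∀ N : Submodule R M, (N.colon ⊤) • (⊤ : Submodule R M) = N)
    (hJfg : J.FG)
    (hJfaithful : (J : Submodule R R).annihilator = ⊥)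
    (hJmult : ∀ K : Ideal R, K ≤ J → ∃ C : Ideal R, K = C * J) :
    colonIdeal (J • P) J = P ∧
      (P ≤ J • (⊤ : Submodule R M) →
        ∀ K : Ideal R, colonIdeal (K • P) J = K • colonIdeal P J) := by
  refine ⟨colonIdeal_smul_eq_self hMfaithful hMmult hJfg hJfaithful hJmult P, fun hP K => ?_⟩
  have hKP : K • P = J • K • colonIdeal P J := by
    rw [← Submodule.mul_smul, mul_comm, Submodule.mul_smul,
      smul_colonIdeal_eq_self hJfg hJfaithful hJmult hP]
  rw [hKP, colonIdeal_smul_eq_self hMfaithful hMmult hJfg hJfaithful hJmult]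
end

section
/- Let R be a commutative ring, M an R-module, P a submodule of M, r ∈ R, and F a flat R-module. Identifying F ⊗ N, for a submodule N of M, with its image in F ⊗ M under the map induced by the inclusion N → M, one has F ⊗ (P : r) = (F ⊗ P :_{F⊗M} r), where (P : r) = {m ∈ M : rm ∈ P} and (F ⊗ P :_{F⊗M} r) = {x ∈ F ⊗ M : rx ∈ F ⊗ P}. -/
open TensorProduct

/-!
Tensoring the exact sequence `0 → ker g → M → M'` with a flat module keeps it exact, so
`F ⊗ ker g = ker (F ⊗ g)`. For any linear `f : M → M'` and `N ≤ M'`, the preimage `f⁻¹(N)` is the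
kernel of `M → M' → M'/N` and `F ⊗ N` the kernel of `F ⊗ M' → F ⊗ (M'/N)`; hence
`F ⊗ f⁻¹(N) = (F ⊗ f)⁻¹(F ⊗ N)`. The theorem is the case of multiplication by `r`.
-/

/-- The image of `F ⊗ N` in `F ⊗ M`, under the map induced by the inclusion `N → M`. -/
noncomputable def tensorImage {R : Type*} [CommRing R] {M : Type*} [AddCommGroup M] [Module R M]
    (F : Type*) [AddCommGroup F] [Module R F] (N : Submodule R M) :
    Submodule R (F ⊗[R] M) :=
  LinearMap.range (LinearMap.lTensor F N.subtype)

section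

variable {R : Type*} [CommRing R] {M M' : Type*} [AddCommGroup M] [Module R M]
  [AddCommGroup M'] [Module R M'] (F : Type*) [AddCommGroup F] [Module R F] [Module.Flat R F]

theorem tensorImage_ker (g : M →ₗ[R] M') :
    tensorImage F (LinearMap.ker g) = LinearMap.ker (g.lTensor F) :=
  (Module.Flat.lTensor_exact F (LinearMap.exact_subtype_ker_map g)).linearMap_ker_eq.symm

theorem tensorImage_comap (f : M →ₗ[R] M') (N : Submodule R M') :
    tensorImage F (N.comap f) = (tensorImage F N).comap (f.lTensor F) := by
  have hN : tensorImage F N = LinearMap.ker (N.mkQ.lTensor F) := by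
    rw [← tensorImage_ker, Submodule.ker_mkQ]
  rw [← Submodule.ker_mkQ N, ← LinearMap.ker_comp, tensorImage_ker, LinearMap.lTensor_comp,
    LinearMap.ker_comp, Submodule.ker_mkQ, hN]

end

theorem stmt16 {R : Type*} [CommRing R] {M : Type*} [AddCommGroup M] [Module R M]
    (F : Type*) [AddCommGroup F] [Module R F] [Module.Flat R F]
    (P : Submodule R M) (r : R) :
    tensorImage F (P.comap (r • (LinearMap.id : M →ₗ[R] M))) =
      (tensorImage F P).comap (r • (LinearMap.id : F ⊗[R] M →ₗ[R] F ⊗[R] M)) := by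
  rw [tensorImage_comap, LinearMap.lTensor_smul, LinearMap.lTensor_id]
end

section
/- Let R be a commutative ring, I an ideal of R, M an R-module, and x an indeterminate. If P is an I-primary submodule of M, then P[x] is an I-primary submodule of the R-module M[x], where M[x] denotes the polynomial module (elements are polynomials in x with coefficients in M) and P[x] is the submodule of M[x] consisting of those polynomials all of whose coefficients lie in P. -/
/-- `P[x]`: the submodule of the polynomial module `M[x]` consisting of those
polynomials all of whose coefficients lie in `P`. -/
noncomputable def polySubmodule {R : Type*} [CommRing R] {M : Type*} [AddCommGroup M]
    [Module R M] (P : Submodule R M) : Submodule R (PolynomialModule R M) where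
  carrier := {f : PolynomialModule R M | ∀ i : ℕ, f.coeff i ∈ P}
  add_mem' := fun {f g} hf hg i => by
    show (f.coeff + g.coeff) i ∈ P
    rw [Finsupp.add_apply]
    exact P.add_mem (hf i) (hg i)
  zero_mem' := fun i => by
    show (0 : ℕ →₀ M) i ∈ P
    simp only [Finsupp.coe_zero, Pi.zero_apply]
    exact P.zero_mem
  smul_mem' := fun r f hf i => by
    show (r • f.coeff : ℕ →₀ M) i ∈ P
    rw [Finsupp.smul_apply]
    exact P.smul_mem r (hf i)

namespace IsIPrimary

variable {R : Type*} [CommRing R] {M : Type*} [AddCommGroup M] [Module R M]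
  {I : Ideal R} {P : Submodule R M} {r : R} {m n : M}

lemma smul_mem_smul_of_notMem (hP : IsIPrimary I P) (hr : r ∉ (P.colon ⊤).radical)
    (hm : m ∉ P) (hrm : r • m ∈ P) : r • m ∈ I • P := by
  by_contra hrm'
  exact (hP.2 r m hrm hrm').elim hm hr

lemma smul_mem_smul_of_smul_mem (hP : IsIPrimary I P) (hr : r ∉ (P.colon ⊤).radical)
    (hm : m ∉ P) (hrm : r • m ∈ P) (hrn : r • n ∈ P) : r • n ∈ I • P := by
  by_cases hn : n ∈ P
  · have hmn : m + n ∉ P := fun h => hm (by simpa using P.sub_mem h hn)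
    have hrmn : r • (m + n) ∈ I • P :=
      hP.smul_mem_smul_of_notMem hr hmn (by rw [smul_add]; exact P.add_mem hrm hrn)
    have hrn_eq : r • n = r • (m + n) - r • m := by rw [smul_add]; abel
    rw [hrn_eq]
    exact Submodule.sub_mem _ hrmn (hP.smul_mem_smul_of_notMem hr hm hrm)
  · exact hP.smul_mem_smul_of_notMem hr hn hrn

end IsIPrimary

namespace PolynomialModule

variable {R : Type*} [CommRing R] {M : Type*} [AddCommGroup M] [Module R M]

lemma coeff_smul_apply (r : R) (f : PolynomialModule R M) (j : ℕ) :
    (r • f).coeff j = r • f.coeff j :=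
  rfl

end PolynomialModule

section polySubmodule

open PolynomialModule

variable {R : Type*} [CommRing R] {M : Type*} [AddCommGroup M] [Module R M]
  {I : Ideal R} {P : Submodule R M}

lemma single_mem_polySubmodule {m : M} (hm : m ∈ P) (i : ℕ) :
    single R i m ∈ polySubmodule P := by
  intro j
  rw [coeff_single, Finsupp.single_apply]
  split_ifs
  · exact hm
  · exact P.zero_mem

lemma polySubmodule_ne_top (hP : P ≠ ⊤) : polySubmodule P ≠ ⊤ := by
  intro h
  refine hP (Submodule.eq_top_iff'.mpr fun m => ?_)
  have hm : single R 0 m ∈ polySubmodule P := h ▸ Submodule.mem_top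
  simpa using hm 0

lemma colon_top_le_colon_top_polySubmodule :
    P.colon ⊤ ≤ (polySubmodule P).colon ⊤ := by
  intro s hs
  rw [Submodule.mem_colon] at hs ⊢
  intro g _ j
  rw [coeff_smul_apply]
  exact hs (g.coeff j) trivial

lemma single_mem_smul_polySubmodule {m : M} (hm : m ∈ I • P) (i : ℕ) :
    single R i m ∈ I • polySubmodule P := by
  have hmap : P.map (lsingle R i) ≤ polySubmodule P :=
    Submodule.map_le_iff_le_comap.mpr fun m hm => single_mem_polySubmodule hm i
  have hmem : single R i m ∈ (I • P).map (lsingle R i) := Submodule.mem_map_of_mem hm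
  rw [Submodule.map_smul''] at hmem
  exact smul_mono_right I hmap hmem

lemma mem_smul_polySubmodule_of_forall_coeff_mem {g : PolynomialModule R M}
    (h : ∀ j, g.coeff j ∈ I • P) : g ∈ I • polySubmodule P := by
  have hg : g = ∑ j ∈ g.coeff.support, single R j (g.coeff j) := by
    rw [← coeff_inj, coeff_sum]
    simp only [coeff_single]
    exact (Finsupp.sum_single g.coeff).symm
  rw [hg]
  exact Submodule.sum_mem _ fun j _ => single_mem_smul_polySubmodule (h j) j

end polySubmodule

theorem stmt19 {R : Type*} [CommRing R] {M : Type*} [AddCommGroup M] [Module R M]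
    (I : Ideal R) (P : Submodule R M)
    (hP : IsIPrimary I P) :
    IsIPrimary I (polySubmodule P) := by
  refine ⟨polySubmodule_ne_top hP.1, fun r f hrf hnot => ?_⟩
  by_cases hr : r ∈ (P.colon ⊤).radical
  · exact Or.inr (Ideal.radical_mono colon_top_le_colon_top_polySubmodule hr)
  refine Or.inl fun i => by_contra fun hfi => hnot ?_
  refine mem_smul_polySubmodule_of_forall_coeff_mem fun j => ?_
  rw [PolynomialModule.coeff_smul_apply]
  exact hP.smul_mem_smul_of_smul_mem hr hfi (hrf i) (hrf j)
end
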